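/- For any matrices L ∈ ℝ^{m×r} and R ∈ ℝ^{n×r}, the nuclear norm of their product satisfies ‖L·R'‖_* ≤ (‖L‖_F² + ‖R‖_F²)/2. -/

import Mathlib

open Matrix

/-- The Frobenius norm of a real matrix. -/
noncomputable def frobNorm {m n : Type*} [Fintype m] [Fintype n] (X : Matrix m n ℝ) : ℝ :=
  Real.sqrt (∑ i, ∑ j, X i j ^ 2)

/-- The nuclear norm (sum of singular values) of a real matrix, as the trace of √(XᵀX). -/
noncomputable def nucNorm {m n : Type*} [Fintype m] [Fintype n] [DecidableEq n]
    (X : Matrix m n ℝ) : ℝ :=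
  ((Matrix.posSemidef_conjTranspose_mul_self X).isHermitian.eigenvectorUnitary.1 *
    diagonal ((RCLike.ofReal : ℝ → ℝ) ∘ Real.sqrt ∘ (Matrix.posSemidef_conjTranspose_mul_self X).isHermitian.eigenvalues) *
    (star (Matrix.posSemidef_conjTranspose_mul_self X).isHermitian.eigenvectorUnitary :
      Matrix n n ℝ)).trace

/-! With `v i` orthonormal eigenvectors of `Xᵀ X = R Lᵀ L Rᵀ`, `σ i = √λ i` and
`u i = (σ i)⁻¹ • X v i`, each singular value is `σ i = u i ⬝ X v i = (Lᵀ u i) ⬝ (Rᵀ v i)`, which is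
at most `(|Lᵀ u i|² + |Rᵀ v i|²) / 2`. The `u i` are pairwise orthogonal of norm at most one and the
`v i` orthonormal, so Bessel's inequality, applied to each column of `L` and of `R`, bounds
`∑ |Lᵀ u i|²` by `‖L‖_F²` and `∑ |Rᵀ v i|²` by `‖R‖_F²`. -/

open RealInnerProductSpace

theorem sum_sq_inner_le_norm_sq_of_pairwise_orthogonal {ι E : Type*} [Fintype ι]
    [NormedAddCommGroup E] [InnerProductSpace ℝ E] {u : ι → E}
    (horth : Pairwise fun i j => ⟪u i, u j⟫ = 0) (hnorm : ∀ i, ‖u i‖ ≤ 1) (x : E) :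
    ∑ i, ⟪u i, x⟫ ^ 2 ≤ ‖x‖ ^ 2 := by
  set c : ι → ℝ := fun i => ⟪u i, x⟫
  set y := ∑ i, c i • u i
  have hxy : ⟪x, y⟫ = ∑ i, c i ^ 2 := by
    simp only [y, inner_sum, real_inner_smul_right, real_inner_comm, c, sq]
  have hyy : ‖y‖ ^ 2 ≤ ∑ i, c i ^ 2 := calc
    ‖y‖ ^ 2 = ∑ i, c i ^ 2 * ‖u i‖ ^ 2 := by
      rw [← real_inner_self_eq_norm_sq]
      simp only [y, inner_sum, sum_inner, real_inner_smul_left, real_inner_smul_right]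
      refine Finset.sum_congr rfl fun i _ => ?_
      rw [Finset.sum_eq_single i (fun j _ hji => by rw [horth hji, mul_zero, mul_zero]) (by simp),
        real_inner_self_eq_norm_sq]
      ring
    _ ≤ ∑ i, c i ^ 2 := Finset.sum_le_sum fun i _ =>
      mul_le_of_le_one_right (sq_nonneg _) (pow_le_one₀ (norm_nonneg _) (hnorm i))
  linarith [norm_sub_sq_real x y, sq_nonneg ‖x - y‖]

theorem sum_sq_dotProduct_le_of_pairwise_orthogonal {ι m : Type*} [Fintype ι] [Fintype m]
    {u : ι → m → ℝ}
    (horth : Pairwise fun i j => u i ⬝ᵥ u j = 0) (hnorm : ∀ i, u i ⬝ᵥ u i ≤ 1) (x : m → ℝ) :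
    ∑ i, (u i ⬝ᵥ x) ^ 2 ≤ x ⬝ᵥ x := by
  have inner_eq (a b : m → ℝ) : ⟪WithLp.toLp 2 a, WithLp.toLp 2 b⟫ = a ⬝ᵥ b := by
    rw [EuclideanSpace.inner_toLp_toLp, star_trivial, dotProduct_comm]
  have norm_sq_eq (a : m → ℝ) : ‖WithLp.toLp 2 a‖ ^ 2 = a ⬝ᵥ a := by
    rw [← real_inner_self_eq_norm_sq, inner_eq]
  have bessel := sum_sq_inner_le_norm_sq_of_pairwise_orthogonal
    (u := fun i => WithLp.toLp 2 (u i))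
    (fun i j hij => (inner_eq _ _).trans (horth hij))
    (fun i => (sq_le_one_iff₀ (norm_nonneg _)).mp ((norm_sq_eq _).trans_le (hnorm i)))
    (WithLp.toLp 2 x)
  simpa only [inner_eq, norm_sq_eq] using bessel

section Frobenius
variable {ι m n k : Type*} [Fintype ι] [Fintype m] [Fintype n] [Fintype k]

theorem frobNorm_sq (A : Matrix m k ℝ) : frobNorm A ^ 2 = ∑ i, ∑ j, A i j ^ 2 :=
  Real.sq_sqrt (by positivity)

theorem sum_transpose_mulVec_dotProduct_self_le (A : Matrix m k ℝ) {u : ι → m → ℝ}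
    (hu : ∀ x, ∑ i, (u i ⬝ᵥ x) ^ 2 ≤ x ⬝ᵥ x) :
    ∑ i, (Aᵀ *ᵥ u i) ⬝ᵥ (Aᵀ *ᵥ u i) ≤ frobNorm A ^ 2 := calc
  ∑ i, (Aᵀ *ᵥ u i) ⬝ᵥ (Aᵀ *ᵥ u i) = ∑ j, ∑ i, (u i ⬝ᵥ Aᵀ j) ^ 2 := by
    rw [Finset.sum_comm]
    simp only [dotProduct, mulVec, sq, mul_comm]
  _ ≤ ∑ j, Aᵀ j ⬝ᵥ Aᵀ j := Finset.sum_le_sum fun j _ => hu (Aᵀ j)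
  _ = frobNorm A ^ 2 := by
    rw [frobNorm_sq, Finset.sum_comm]
    simp only [dotProduct, transpose_apply, sq]

theorem dotProduct_le_add_div_two (a b : k → ℝ) : a ⬝ᵥ b ≤ (a ⬝ᵥ a + b ⬝ᵥ b) / 2 := by
  simp only [dotProduct, ← Finset.sum_add_distrib, Finset.sum_div]
  gcongr with j
  nlinarith [sq_nonneg (a j - b j)]

theorem sum_dotProduct_mul_transpose_mulVec_le (L : Matrix m k ℝ) (R : Matrix n k ℝ)
    {u : ι → m → ℝ} {v : ι → n → ℝ} (hu : ∀ x, ∑ i, (u i ⬝ᵥ x) ^ 2 ≤ x ⬝ᵥ x)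
    (hv : ∀ y, ∑ i, (v i ⬝ᵥ y) ^ 2 ≤ y ⬝ᵥ y) :
    ∑ i, u i ⬝ᵥ (L * Rᵀ) *ᵥ v i ≤ (frobNorm L ^ 2 + frobNorm R ^ 2) / 2 := calc
  ∑ i, u i ⬝ᵥ (L * Rᵀ) *ᵥ v i = ∑ i, (Lᵀ *ᵥ u i) ⬝ᵥ (Rᵀ *ᵥ v i) := by
    simp only [← mulVec_mulVec, dotProduct_mulVec, mulVec_transpose]
  _ ≤ ∑ i, ((Lᵀ *ᵥ u i) ⬝ᵥ (Lᵀ *ᵥ u i) + (Rᵀ *ᵥ v i) ⬝ᵥ (Rᵀ *ᵥ v i)) / 2 :=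
    Finset.sum_le_sum fun i _ => dotProduct_le_add_div_two _ _
  _ ≤ (frobNorm L ^ 2 + frobNorm R ^ 2) / 2 := by
    rw [← Finset.sum_div, Finset.sum_add_distrib]
    gcongr
    exacts [sum_transpose_mulVec_dotProduct_self_le L hu,
      sum_transpose_mulVec_dotProduct_self_le R hv]

end Frobenius

namespace Matrix
variable {m n : Type*} [Fintype m] [Fintype n] [DecidableEq n] (X : Matrix m n ℝ)

noncomputable def singularValue (i : n) : ℝ :=
  √((posSemidef_conjTranspose_mul_self X).isHermitian.eigenvalues i)

noncomputable def rightSingularVector (i : n) : n → ℝ :=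
  ⇑((posSemidef_conjTranspose_mul_self X).isHermitian.eigenvectorBasis i)

/-- Where `σ i = 0` the junk value `0⁻¹ = 0` makes this vector `0`. -/
noncomputable def leftSingularVector (i : n) : m → ℝ :=
  (X.singularValue i)⁻¹ • X *ᵥ X.rightSingularVector i

theorem nucNorm_eq_sum_singularValue : nucNorm X = ∑ i, X.singularValue i := by
  rw [nucNorm, trace_mul_cycle, Unitary.coe_star_mul_self, one_mul, trace_diagonal]
  rfl

theorem rightSingularVector_dotProduct (i j : n) :
    X.rightSingularVector i ⬝ᵥ X.rightSingularVector j = if i = j then 1 else 0 := by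
  have := orthonormal_iff_ite.mp
    (posSemidef_conjTranspose_mul_self X).isHermitian.eigenvectorBasis.orthonormal j i
  rw [EuclideanSpace.inner_eq_star_dotProduct, star_trivial] at this
  rw [rightSingularVector, rightSingularVector, this]
  exact if_congr eq_comm rfl rfl

theorem transpose_mul_self_mulVec_rightSingularVector (i : n) :
    (Xᵀ * X) *ᵥ X.rightSingularVector i = X.singularValue i ^ 2 • X.rightSingularVector i := by
  have hA := posSemidef_conjTranspose_mul_self X
  rw [singularValue, Real.sq_sqrt (hA.eigenvalues_nonneg i),
    ← conjTranspose_eq_transpose_of_trivial]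
  exact hA.isHermitian.mulVec_eigenvectorBasis i

theorem mulVec_rightSingularVector_dotProduct (i j : n) :
    X *ᵥ X.rightSingularVector i ⬝ᵥ X *ᵥ X.rightSingularVector j =
      if i = j then X.singularValue i ^ 2 else 0 := by
  rw [dotProduct_mulVec, vecMul_mulVec, ← dotProduct_mulVec,
    transpose_mul_self_mulVec_rightSingularVector, dotProduct_smul, rightSingularVector_dotProduct]
  split_ifs with h <;> simp [h]

theorem leftSingularVector_dotProduct (i j : n) :
    X.leftSingularVector i ⬝ᵥ X.leftSingularVector j =
      if i = j ∧ X.singularValue i ≠ 0 then 1 else 0 := by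
  simp only [leftSingularVector, smul_dotProduct, dotProduct_smul,
    mulVec_rightSingularVector_dotProduct]
  by_cases h : i = j
  · subst h
    by_cases hσ : X.singularValue i = 0
    · simp [hσ]
    · simp only [smul_eq_mul, if_true, true_and, if_pos hσ]
      field_simp
  · simp [h]

theorem leftSingularVector_dotProduct_mulVec_rightSingularVector (i : n) :
    X.leftSingularVector i ⬝ᵥ X *ᵥ X.rightSingularVector i = X.singularValue i := by
  rw [leftSingularVector, smul_dotProduct, mulVec_rightSingularVector_dotProduct, if_pos rfl,
    smul_eq_mul]
  by_cases hσ : X.singularValue i = 0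
  · simp [hσ]
  · field_simp

theorem sum_sq_rightSingularVector_dotProduct_le (y : n → ℝ) :
    ∑ i, (X.rightSingularVector i ⬝ᵥ y) ^ 2 ≤ y ⬝ᵥ y :=
  sum_sq_dotProduct_le_of_pairwise_orthogonal
    (fun i j h => by simp [rightSingularVector_dotProduct, h])
    (fun i => by simp [rightSingularVector_dotProduct]) y

theorem sum_sq_leftSingularVector_dotProduct_le (x : m → ℝ) :
    ∑ i, (X.leftSingularVector i ⬝ᵥ x) ^ 2 ≤ x ⬝ᵥ x :=
  sum_sq_dotProduct_le_of_pairwise_orthogonal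
    (fun i j h => by simp [leftSingularVector_dotProduct, h])
    (fun i => by rw [leftSingularVector_dotProduct]; split_ifs <;> norm_num) x

end Matrix

/-- For any factorization, ‖L Rᵀ‖₊ ≤ (‖L‖_F² + ‖R‖_F²)/2. -/
theorem nucNorm_mul_transpose_le (m n r : ℕ)
    (L : Matrix (Fin m) (Fin r) ℝ) (R : Matrix (Fin n) (Fin r) ℝ) :
    nucNorm (L * Rᵀ) ≤ (frobNorm L ^ 2 + frobNorm R ^ 2) / 2 := by
  set X := L * Rᵀ
  calc nucNorm X = ∑ i, X.leftSingularVector i ⬝ᵥ X *ᵥ X.rightSingularVector i := by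
        simp only [nucNorm_eq_sum_singularValue,
          leftSingularVector_dotProduct_mulVec_rightSingularVector]
    _ ≤ (frobNorm L ^ 2 + frobNorm R ^ 2) / 2 :=
        sum_dotProduct_mul_transpose_mulVec_le L R X.sum_sq_leftSingularVector_dotProduct_le
          X.sum_sq_rightSingularVector_dotProduct_le
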